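/- arXiv:2005.13273 — 3 statements merged into one kernel-verified Lean document; each statement's English description precedes it below -/
import Mathlib

section
/- If g and g' are block structures (each with at most K×H blocks) that are not equivalent up to permutation of cluster indices and neither is a refinement of the other, then E^{(g)} − E^{(g')} is not the zero matrix. -/
open Matrix Finset

open Matrix Finset

/-- The normalized indicator vector `e^{(k,h)}` of the block `(k,h)`. -/
noncomputable def blockVec {n p K H : ℕ} (g1 : Fin n → Fin K) (g2 : Fin p → Fin H)
    (b : Fin K × Fin H) : Fin n × Fin p → ℝ :=
  fun ij =>
    if g1 ij.1 = b.1 ∧ g2 ij.2 = b.2 then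
      1 / Real.sqrt (((univ.filter fun i => g1 i = b.1).card
        * (univ.filter fun j => g2 j = b.2).card : ℕ))
    else 0

/-- The matrix `E^{(g)} = I − Σ_{k,h} e^{(k,h)}(e^{(k,h)})ᵀ`. -/
noncomputable def blockProj {n p K H : ℕ} (g1 : Fin n → Fin K) (g2 : Fin p → Fin H) :
    Matrix (Fin n × Fin p) (Fin n × Fin p) ℝ :=
  1 - ∑ b : Fin K × Fin H, vecMulVec (blockVec g1 g2 b) (blockVec g1 g2 b)

/-- `(g1', g2')` refines `(g1, g2)`: every block of the former is contained in a block
of the latter. -/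
def Refines {n p K H K' H' : ℕ} (g1 : Fin n → Fin K) (g2 : Fin p → Fin H)
    (g1' : Fin n → Fin K') (g2' : Fin p → Fin H') : Prop :=
  ∀ i i' : Fin n, ∀ j j' : Fin p,
    (g1' i = g1' i' ∧ g2' j = g2' j') → (g1 i = g1 i' ∧ g2 j = g2 j')

lemma blockSum_eq_zero {n p K H : ℕ} (g1 : Fin n → Fin K) (g2 : Fin p → Fin H)
    (i i' : Fin n) (j j' : Fin p) (h : ¬ (g1 i = g1 i' ∧ g2 j = g2 j')) :
    ∑ b : Fin K × Fin H, blockVec g1 g2 b (i, j) * blockVec g1 g2 b (i', j') = 0 := by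
  apply Finset.sum_eq_zero
  intro b _
  unfold blockVec
  simp only
  split_ifs with h1 h2
  · exact absurd ⟨h1.1.trans h2.1.symm, h1.2.trans h2.2.symm⟩ h
  all_goals ring

lemma blockSum_pos {n p K H : ℕ} (g1 : Fin n → Fin K) (g2 : Fin p → Fin H)
    (i i' : Fin n) (j j' : Fin p) (h : g1 i = g1 i' ∧ g2 j = g2 j') :
    0 < ∑ b : Fin K × Fin H, blockVec g1 g2 b (i, j) * blockVec g1 g2 b (i', j') := by
  apply Finset.sum_pos'
  · intro b _
    unfold blockVec
    simp only
    split_ifs with h1 h2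
    · apply mul_nonneg <;> positivity
    all_goals simp
  · refine ⟨(g1 i, g2 j), Finset.mem_univ _, ?_⟩
    unfold blockVec
    simp only
    rw [if_pos ⟨trivial, trivial⟩, if_pos ⟨h.1.symm, h.2.symm⟩]
    have hc : (0:ℝ) < (((univ.filter fun a => g1 a = g1 i).card
        * (univ.filter fun a => g2 a = g2 j).card : ℕ) : ℝ) := by
      have h1 : 0 < (univ.filter fun a => g1 a = g1 i).card :=
        Finset.card_pos.mpr ⟨i, by simp⟩
      have h2 : 0 < (univ.filter fun a => g2 a = g2 j).card :=
        Finset.card_pos.mpr ⟨j, by simp⟩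
      positivity
    positivity

/-- if block structures `g` and `g'` are not equivalent (do not induce the
same partition into blocks), and neither refines the other, then
`E^{(g)} − E^{(g')} ≠ O`. -/
theorem blockProj_difference_ne_zero {n p K H : ℕ}
    (g1 : Fin n → Fin K) (g2 : Fin p → Fin H)
    (g1' : Fin n → Fin K) (g2' : Fin p → Fin H)
    (hne : ¬ (∀ i i' : Fin n, ∀ j j' : Fin p,
      (g1 i = g1 i' ∧ g2 j = g2 j') ↔ (g1' i = g1' i' ∧ g2' j = g2' j')))
    (href1 : ¬ Refines g1 g2 g1' g2') (href2 : ¬ Refines g1' g2' g1 g2) :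
    blockProj g1 g2 - blockProj g1' g2' ≠ 0 := by
  intro h0
  have heq : blockProj g1 g2 = blockProj g1' g2' := sub_eq_zero.mp h0
  apply hne
  intro i i' j j'
  have hent := congrFun (congrFun heq (i, j)) (i', j')
  unfold blockProj at hent
  simp only [Matrix.sub_apply, Matrix.sum_apply, Matrix.vecMulVec_apply] at hent
  have hsum : ∑ b : Fin K × Fin H, blockVec g1 g2 b (i, j) * blockVec g1 g2 b (i', j')
      = ∑ b : Fin K × Fin H, blockVec g1' g2' b (i, j) * blockVec g1' g2' b (i', j') := by
    linarith
  constructor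
  · intro h
    by_contra h'
    have := blockSum_pos g1 g2 i i' j j' h
    rw [hsum, blockSum_eq_zero g1' g2' i i' j j' h'] at this
    exact lt_irrefl 0 this
  · intro h
    by_contra h'
    have := blockSum_pos g1' g2' i i' j j' h
    rw [← hsum, blockSum_eq_zero g1 g2 i i' j j' h'] at this
    exact lt_irrefl 0 this
end

section
/- With r = E^{(ĝ)}x, u = r/‖r‖₂, z = x − r, the coefficients of f^{(g,ĝ)}(t) = (tσ₀u + z)ᵀ(E^{(g)} − E^{(ĝ)})(tσ₀u + z) satisfy: a^{(g,ĝ)} = −σ₀²‖(I − E^{(g)})u‖₂² ≤ 0, b^{(g,ĝ)} = 2σ₀uᵀE^{(g)}z, and c^{(g,ĝ)} = ‖E^{(g)}z‖₂² ≥ 0. Moreover, if a^{(g,ĝ)} = 0 then b^{(g,ĝ)} = 0, so f^{(g,ĝ)}(t) ≥ 0 for all t. -/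
open Matrix

/-- with `r = E^{(ĝ)}x`, `u = r/‖r‖₂`, `z = x − r`, the coefficients of
`f^{(g,ĝ)}(t) = (tσ₀u + z)ᵀ(E^{(g)} − E^{(ĝ)})(tσ₀u + z)` satisfy
`a = −σ₀²‖(I − E^{(g)})u‖₂² ≤ 0`, `b = 2σ₀uᵀE^{(g)}z`, `c = ‖E^{(g)}z‖₂² ≥ 0`, and
if `a = 0` then `b = 0`, so `f(t) ≥ 0` for all `t`. -/
theorem truncation_coefficients {m : ℕ}
    (Eg Egh : Matrix (Fin m) (Fin m) ℝ)
    (hsymg : Egᵀ = Eg) (hidemg : Eg * Eg = Eg)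
    (hsymgh : Eghᵀ = Egh) (hidemgh : Egh * Egh = Egh)
    (σ₀ : ℝ) (hσ : 0 < σ₀)
    (x : Fin m → ℝ) (hx : Egh.mulVec x ≠ 0) :
    letI r : Fin m → ℝ := Egh.mulVec x
    letI u : Fin m → ℝ := (Real.sqrt (r ⬝ᵥ r))⁻¹ • r
    letI z : Fin m → ℝ := x - r
    letI a : ℝ := σ₀ ^ 2 * (u ⬝ᵥ (Eg - Egh).mulVec u)
    letI b : ℝ := 2 * σ₀ * (u ⬝ᵥ (Eg - Egh).mulVec z)
    letI c : ℝ := z ⬝ᵥ (Eg - Egh).mulVec z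
    a = -(σ₀ ^ 2 * (((1 - Eg).mulVec u) ⬝ᵥ ((1 - Eg).mulVec u))) ∧ a ≤ 0 ∧
    b = 2 * σ₀ * (u ⬝ᵥ Eg.mulVec z) ∧
    c = (Eg.mulVec z) ⬝ᵥ (Eg.mulVec z) ∧ 0 ≤ c ∧
    (a = 0 → b = 0) ∧
    (a = 0 → ∀ t : ℝ, 0 ≤ a * t ^ 2 + b * t + c) := by
  set r : Fin m → ℝ := Egh.mulVec x with hrdef
  set u : Fin m → ℝ := (Real.sqrt (r ⬝ᵥ r))⁻¹ • r with hudef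
  set z : Fin m → ℝ := x - r with hzdef
  have dpsn : ∀ v : Fin m → ℝ, 0 ≤ v ⬝ᵥ v := fun v =>
    Finset.sum_nonneg fun i _ => mul_self_nonneg _
  have hsw : ∀ (M : Matrix (Fin m) (Fin m) ℝ), Mᵀ = M → ∀ v w : Fin m → ℝ,
      v ⬝ᵥ M.mulVec w = M.mulVec v ⬝ᵥ w := by
    intro M hM v w
    rw [dotProduct_mulVec, ← mulVec_transpose, hM]
  have hrr : 0 < r ⬝ᵥ r := by
    rcases lt_or_eq_of_le (dpsn r) with h | h
    · exact h
    · exact absurd ((dotProduct_self_eq_zero).mp h.symm) hx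
  have huu : u ⬝ᵥ u = 1 := by
    rw [hudef, smul_dotProduct, dotProduct_smul, smul_eq_mul, smul_eq_mul,
      ← mul_assoc, ← mul_inv, Real.mul_self_sqrt hrr.le]
    exact inv_mul_cancel₀ hrr.ne'
  have hEghr : Egh.mulVec r = r := by
    rw [hrdef, mulVec_mulVec, hidemgh]
  have hEghu : Egh.mulVec u = u := by
    rw [hudef, mulVec_smul, hEghr]
  have hEghz : Egh.mulVec z = 0 := by
    rw [hzdef, mulVec_sub, hEghr, hrdef, sub_self]
  have hEgEg : ∀ v : Fin m → ℝ, Eg.mulVec (Eg.mulVec v) = Eg.mulVec v := by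
    intro v; rw [mulVec_mulVec, hidemg]
  have huEghz : u ⬝ᵥ Egh.mulVec z = 0 := by rw [hEghz, dotProduct_zero]
  have hzEghz : z ⬝ᵥ Egh.mulVec z = 0 := by rw [hEghz, dotProduct_zero]
  have huEghu : u ⬝ᵥ Egh.mulVec u = 1 := by rw [hEghu, huu]
  have hEgdot : ∀ v w : Fin m → ℝ, Eg.mulVec v ⬝ᵥ Eg.mulVec w = v ⬝ᵥ Eg.mulVec w := by
    intro v w
    rw [← hsw Eg hsymg, hEgEg]
  have ha1 : u ⬝ᵥ (Eg - Egh).mulVec u = -((1 - Eg).mulVec u ⬝ᵥ (1 - Eg).mulVec u) := by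
    rw [sub_mulVec, dotProduct_sub, huEghu, sub_mulVec, one_mulVec,
      sub_dotProduct, dotProduct_sub, dotProduct_sub, huu,
      hEgdot u u, hsw Eg hsymg u u]
    ring
  have hc1 : z ⬝ᵥ (Eg - Egh).mulVec z = Eg.mulVec z ⬝ᵥ Eg.mulVec z := by
    rw [sub_mulVec, dotProduct_sub, hzEghz, hEgdot z z, sub_zero]
  have hb1 : u ⬝ᵥ (Eg - Egh).mulVec z = u ⬝ᵥ Eg.mulVec z := by
    rw [sub_mulVec, dotProduct_sub, huEghz, sub_zero]
  have huz : u ⬝ᵥ z = 0 := by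
    rw [← hEghu, ← hsw Egh hsymgh, huEghz]
  have hcpos : 0 ≤ z ⬝ᵥ (Eg - Egh).mulVec z := by rw [hc1]; exact dpsn _
  have key : σ₀ ^ 2 * (u ⬝ᵥ (Eg - Egh).mulVec u) = 0 →
      2 * σ₀ * (u ⬝ᵥ (Eg - Egh).mulVec z) = 0 := by
    intro ha0
    rw [ha1] at ha0
    have hs : σ₀ ^ 2 ≠ 0 := pow_ne_zero _ hσ.ne'
    have h0 : (1 - Eg).mulVec u ⬝ᵥ (1 - Eg).mulVec u = 0 :=
      neg_eq_zero.mp ((mul_eq_zero.mp ha0).resolve_left hs)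
    have h1 : (1 - Eg).mulVec u = 0 := dotProduct_self_eq_zero.mp h0
    have h2 : Eg.mulVec u = u := by
      rw [sub_mulVec, one_mulVec, sub_eq_zero] at h1
      exact h1.symm
    rw [hb1, hsw Eg hsymg, h2, huz, mul_zero]
  refine ⟨by rw [ha1]; ring, ?_, by rw [hb1], hc1, hcpos, key, ?_⟩
  · rw [ha1]
    have := dpsn ((1 - Eg).mulVec u)
    nlinarith
  · intro ha0 t
    have hb0 := key ha0
    rw [ha0, hb0]
    nlinarith
end

section
/- The number of mutually distinct block structures with exactly K row clusters of n rows and exactly H column clusters of p columns is at least K^{n−K} H^{p−H}. -/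
/-- Two pairs of surjective cluster assignments are related iff they differ only by a
permutation of the row cluster labels and a permutation of the column cluster labels. -/
def labelPermRel {n p K H : ℕ}
    (a b : {f : Fin n → Fin K // Function.Surjective f}
      × {g : Fin p → Fin H // Function.Surjective g}) : Prop :=
  (∃ σ : Equiv.Perm (Fin K), σ ∘ a.1.1 = b.1.1) ∧
    (∃ τ : Equiv.Perm (Fin H), τ ∘ a.2.1 = b.2.1)

lemma labelPermRel_equiv {n p K H : ℕ} :
    Equivalence (labelPermRel (n := n) (p := p) (K := K) (H := H)) := by
  constructor
  · intro a
    exact ⟨⟨1, by simp⟩, ⟨1, by simp⟩⟩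
  · rintro a b ⟨⟨σ, hσ⟩, ⟨τ, hτ⟩⟩
    refine ⟨⟨σ⁻¹, ?_⟩, ⟨τ⁻¹, ?_⟩⟩
    · rw [← hσ]; ext i; simp
    · rw [← hτ]; ext i; simp
  · rintro a b c ⟨⟨σ, hσ⟩, ⟨τ, hτ⟩⟩ ⟨⟨σ', hσ'⟩, ⟨τ', hτ'⟩⟩
    refine ⟨⟨σ' * σ, ?_⟩, ⟨τ' * τ, ?_⟩⟩
    · rw [← hσ', ← hσ]; rfl
    · rw [← hτ', ← hτ]; rfl

/-- Standard surjective assignment extending the identity on the first `K` coordinates. -/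
def stdF {n K : ℕ} (hKn : K ≤ n) (w : Fin (n - K) → Fin K) : Fin n → Fin K :=
  fun i => if h : i.val < K then ⟨i.val, h⟩ else w ⟨i.val - K, by omega⟩

lemma stdF_surj {n K : ℕ} (hKn : K ≤ n) (w : Fin (n - K) → Fin K) :
    Function.Surjective (stdF hKn w) := by
  intro k
  refine ⟨⟨k.val, lt_of_lt_of_le k.isLt hKn⟩, ?_⟩
  simp [stdF, k.isLt]

lemma stdF_fix {n K : ℕ} (hKn : K ≤ n) (w w' : Fin (n - K) → Fin K)
    (σ : Equiv.Perm (Fin K)) (h : σ ∘ stdF hKn w = stdF hKn w') : w = w' := by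
  have hσ : ∀ k : Fin K, σ k = k := by
    intro k
    have := congrFun h ⟨k.val, lt_of_lt_of_le k.isLt hKn⟩
    simpa [stdF, k.isLt] using this
  have hww : stdF hKn w = stdF hKn w' := by
    rw [← h]; ext i; simp [hσ]
  funext j
  have := congrFun hww ⟨K + j.val, by omega⟩
  have hnot : ¬ (K + j.val < K) := by omega
  simp only [stdF, hnot, dif_neg] at this
  simpa [show K + j.val - K = j.val by omega] using this

/-- the number of mutually distinct block structures with exactly `K` row
clusters of `n` rows and exactly `H` column clusters of `p` columns (counted up to
permutations of cluster labels) is at least `K^{n−K} H^{p−H}`. -/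
theorem card_block_structures_lower_bound {n p K H : ℕ}
    (hK : 2 ≤ K) (hKn : K ≤ n) (hH : 2 ≤ H) (hHp : H ≤ p) :
    K ^ (n - K) * H ^ (p - H) ≤ Nat.card (Quot (labelPermRel (n := n) (p := p) (K := K) (H := H))) := by
  set F : (Fin (n - K) → Fin K) × (Fin (p - H) → Fin H) →
      Quot (labelPermRel (n := n) (p := p) (K := K) (H := H)) :=
    fun wv => Quot.mk _ (⟨stdF hKn wv.1, stdF_surj hKn wv.1⟩,
      ⟨stdF hHp wv.2, stdF_surj hHp wv.2⟩) with hF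
  have hinj : Function.Injective F := by
    intro a b hab
    have hrel := (Equivalence.eqvGen_iff labelPermRel_equiv).mp (Quot.eq.mp hab)
    obtain ⟨⟨σ, hσ⟩, ⟨τ, hτ⟩⟩ := hrel
    exact Prod.ext (stdF_fix hKn a.1 b.1 σ hσ) (stdF_fix hHp a.2 b.2 τ hτ)
  have := Nat.card_le_card_of_injective F hinj
  calc K ^ (n - K) * H ^ (p - H)
      = Nat.card ((Fin (n - K) → Fin K) × (Fin (p - H) → Fin H)) := by
        simp [Nat.card_prod, Nat.card_fun, mul_comm, pow_succ]
    _ ≤ _ := this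
end
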